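/- Let A be a smooth ℂ-valued 1-form on an open set U ⊆ ℝⁿ with Riemannian metric g, and let F : U → ℂ \ {0} be a smooth nonvanishing function. Set A' = F*(A) = F⁻¹ dF + A. Then F satisfies d_A* d_A F = 0 on U if and only if d* A' = (A', A')_g, where d* is the codifferential and (·,·)_g is the bilinear pairing on 1-forms induced by g. -/

import Mathlib

open Matrix

section aux
variable {n : ℕ} {U : Set (EuclideanSpace ℝ (Fin n))}

lemma auxProd {ι : Type*} (s : Finset ι) (f : ι → EuclideanSpace ℝ (Fin n) → ℝ)
    (hf : ∀ i ∈ s, ContDiffOn ℝ (⊤ : ℕ∞) (f i) U) :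
    ContDiffOn ℝ (⊤ : ℕ∞) (fun x => ∏ i ∈ s, f i x) U := by
  induction s using Finset.cons_induction with
  | empty => simpa using contDiffOn_const
  | cons i s hi ih =>
    simp only [Finset.prod_cons]
    exact (hf i (Finset.mem_cons_self _ _)).mul
      (ih fun j hj => hf j (Finset.mem_cons.2 (Or.inr hj)))

lemma auxDet (M : EuclideanSpace ℝ (Fin n) → Matrix (Fin n) (Fin n) ℝ)
    (hM : ∀ i j, ContDiffOn ℝ (⊤ : ℕ∞) (fun x => M x i j) U) :
    ContDiffOn ℝ (⊤ : ℕ∞) (fun x => (M x).det) U := by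
  simp only [Matrix.det_apply']
  exact ContDiffOn.sum fun σ _ =>
    contDiffOn_const.mul (auxProd Finset.univ _ fun i _ => hM (σ i) i)

lemma auxInv (M : EuclideanSpace ℝ (Fin n) → Matrix (Fin n) (Fin n) ℝ)
    (hM : ∀ i j, ContDiffOn ℝ (⊤ : ℕ∞) (fun x => M x i j) U)
    (hdet : ∀ x ∈ U, (M x).det ≠ 0) (i j : Fin n) :
    ContDiffOn ℝ (⊤ : ℕ∞) (fun x => (M x)⁻¹ i j) U := by
  have hrw : ∀ x, (M x)⁻¹ i j = ((M x).det)⁻¹ * (M x).adjugate i j := by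
    intro x
    rw [Matrix.inv_def, Ring.inverse_eq_inv']
    simp [Matrix.smul_apply, smul_eq_mul]
  simp only [hrw, Matrix.adjugate_apply]
  refine ((auxDet M hM).inv hdet).mul (auxDet _ ?_)
  intro k l
  rcases eq_or_ne k j with rfl | hk
  · simpa [Matrix.updateRow_apply] using contDiffOn_const
  · simpa [Matrix.updateRow_apply, hk] using hM k l

lemma auxSqrt (d : EuclideanSpace ℝ (Fin n) → ℝ) (hd : ContDiffOn ℝ (⊤ : ℕ∞) d U)
    (hpos : ∀ x ∈ U, 0 < d x) :
    ContDiffOn ℝ (⊤ : ℕ∞) (fun x => Real.sqrt (d x)) U := fun x hx =>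
  (Real.contDiffAt_sqrt (hpos x hx).ne').comp_contDiffWithinAt x (hd x hx)

lemma auxOfReal (c : EuclideanSpace ℝ (Fin n) → ℝ) (hc : ContDiffOn ℝ (⊤ : ℕ∞) c U) :
    ContDiffOn ℝ (⊤ : ℕ∞) (fun y => ((c y : ℝ) : ℂ)) U :=
  Complex.ofRealCLM.contDiff.comp_contDiffOn hc

lemma sumAlg (S f : ℂ) (hS : S ≠ 0)
    (T c G : Fin n → Fin n → ℂ) (P a b : Fin n → ℂ)
    (hc : ∀ ν lam, c ν lam = S * G ν lam)
    (hPb : ∀ ν, P ν + a ν * f = f * b ν) :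
    -S⁻¹ * (∑ ν, ∑ lam, (f * T ν lam + P ν * (c ν lam * b lam)))
      - ∑ ν, ∑ lam, G ν lam * a ν * (P lam + a lam * f)
    = f * (-S⁻¹ * ∑ ν, ∑ lam, T ν lam - ∑ ν, ∑ lam, G ν lam * b ν * b lam) := by
  have hP : ∀ ν, P ν = f * b ν - a ν * f := fun ν => by rw [← hPb ν]; ring
  have e1 : ∑ ν, ∑ lam, (f * T ν lam + P ν * (c ν lam * b lam))
      = f * (∑ ν, ∑ lam, T ν lam)
        + S * ((f * ∑ ν, ∑ lam, G ν lam * b ν * b lam)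
            - f * ∑ ν, ∑ lam, G ν lam * a ν * b lam) := by
    simp only [Finset.mul_sum, ← Finset.sum_sub_distrib, ← Finset.sum_add_distrib]
    refine Finset.sum_congr rfl fun ν _ => Finset.sum_congr rfl fun lam _ => ?_
    rw [hP ν, hc ν lam]; ring
  have e2 : ∑ ν, ∑ lam, G ν lam * a ν * (P lam + a lam * f)
      = f * ∑ ν, ∑ lam, G ν lam * a ν * b lam := by
    simp only [Finset.mul_sum]
    refine Finset.sum_congr rfl fun ν _ => Finset.sum_congr rfl fun lam _ => ?_
    rw [hPb lam]; ring
  rw [e1, e2]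
  field_simp
  ring

end aux

/-- Partial derivative in the `ν`-th coordinate direction. -/
noncomputable def pd {n : ℕ} (ν : Fin n) (f : EuclideanSpace ℝ (Fin n) → ℂ)
    (x : EuclideanSpace ℝ (Fin n)) : ℂ :=
  fderiv ℝ f x (EuclideanSpace.single ν 1)

section aux2
variable {n : ℕ} {U : Set (EuclideanSpace ℝ (Fin n))}

lemma auxPd (hU : IsOpen U) (f : EuclideanSpace ℝ (Fin n) → ℂ)
    (hf : ContDiffOn ℝ (⊤ : ℕ∞) f U) (ν : Fin n) :
    ContDiffOn ℝ (⊤ : ℕ∞) (fun y => pd ν f y) U :=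
  (hf.fderiv_of_isOpen hU (by simp)).clm_apply contDiffOn_const

lemma auxKey (hU : IsOpen U) {x : EuclideanSpace ℝ (Fin n)} (hx : x ∈ U)
    (c h F : EuclideanSpace ℝ (Fin n) → ℂ)
    (hcm : ContDiffOn ℝ (⊤ : ℕ∞) h U) (hFsm : ContDiffOn ℝ (⊤ : ℕ∞) F U)
    (heq : ∀ y ∈ U, c y = F y * h y) (ν : Fin n) :
    pd ν c x = F x * pd ν h x + pd ν F x * h x := by
  have hUx : U ∈ nhds x := hU.mem_nhds hx
  have hFd : DifferentiableAt ℝ F x := (hFsm.contDiffAt hUx).differentiableAt (by simp)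
  have hhd : DifferentiableAt ℝ h x := (hcm.contDiffAt hUx).differentiableAt (by simp)
  have heq' : c =ᶠ[nhds x] fun y => F y * h y :=
    Filter.eventuallyEq_of_mem hUx heq
  unfold pd
  rw [heq'.fderiv_eq, fderiv_fun_mul hFd hhd]
  simp [smul_eq_mul, mul_comm]

end aux2

/-- Codifferential of a ℂ-valued 1-form `α` (given by its components) with respect to a
Riemannian metric `g` on an open set of `ℝⁿ`:
`d*α = −(1/√|g|) ∂_ν (√|g| g^{νλ} α_λ)`. -/
noncomputable def codiff {n : ℕ}
    (g : EuclideanSpace ℝ (Fin n) → Matrix (Fin n) (Fin n) ℝ)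
    (α : EuclideanSpace ℝ (Fin n) → Fin n → ℂ) (x : EuclideanSpace ℝ (Fin n)) : ℂ :=
  -(Real.sqrt ((g x).det))⁻¹ *
    ∑ ν, ∑ lam,
      pd ν (fun y => ((Real.sqrt ((g y).det) * ((g y)⁻¹ ν lam) : ℝ) : ℂ) * α y lam) x

/-- Bilinear pairing `(α, β)_g = g^{νλ} α_ν β_λ` on ℂ-valued 1-forms induced by `g`. -/
noncomputable def pairg {n : ℕ}
    (g : EuclideanSpace ℝ (Fin n) → Matrix (Fin n) (Fin n) ℝ)
    (α β : EuclideanSpace ℝ (Fin n) → Fin n → ℂ) (x : EuclideanSpace ℝ (Fin n)) : ℂ :=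
  ∑ ν, ∑ lam, (((g x)⁻¹ ν lam : ℝ) : ℂ) * α x ν * β x lam

lemma mainEq {n : ℕ}
    {U : Set (EuclideanSpace ℝ (Fin n))} (hU : IsOpen U)
    (g : EuclideanSpace ℝ (Fin n) → Matrix (Fin n) (Fin n) ℝ)
    (hgsm : ∀ i j, ContDiffOn ℝ (⊤ : ℕ∞) (fun x => g x i j) U)
    (hgpos : ∀ x ∈ U, (g x).PosDef)
    (A : EuclideanSpace ℝ (Fin n) → Fin n → ℂ)
    (hAsm : ∀ ν, ContDiffOn ℝ (⊤ : ℕ∞) (fun x => A x ν) U)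
    (F : EuclideanSpace ℝ (Fin n) → ℂ)
    (hFsm : ContDiffOn ℝ (⊤ : ℕ∞) F U) (hFnz : ∀ x ∈ U, F x ≠ 0)
    {x : EuclideanSpace ℝ (Fin n)} (hx : x ∈ U) :
    codiff g (fun y ν => pd ν F y + A y ν * F y) x
      - pairg g A (fun y ν => pd ν F y + A y ν * F y) x
    = F x * (codiff g (fun y ν => (F y)⁻¹ * pd ν F y + A y ν) x
        - pairg g (fun y ν => (F y)⁻¹ * pd ν F y + A y ν)
            (fun y ν => (F y)⁻¹ * pd ν F y + A y ν) x) := by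
  have hdet : ∀ y ∈ U, 0 < (g y).det := fun y hy => (hgpos y hy).det_pos
  have hdet' : ∀ y ∈ U, (g y).det ≠ 0 := fun y hy => (hdet y hy).ne'
  have hsq : ContDiffOn ℝ (⊤ : ℕ∞) (fun y => Real.sqrt ((g y).det)) U :=
    auxSqrt _ (auxDet g hgsm) hdet
  have hc : ∀ ν lam : Fin n,
      ContDiffOn ℝ (⊤ : ℕ∞)
        (fun y => ((Real.sqrt ((g y).det) * ((g y)⁻¹ ν lam) : ℝ) : ℂ)) U :=
    fun ν lam => auxOfReal _ (hsq.mul (auxInv g hgsm hdet' ν lam))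
  have hA' : ∀ lam : Fin n,
      ContDiffOn ℝ (⊤ : ℕ∞) (fun y => (F y)⁻¹ * pd lam F y + A y lam) U :=
    fun lam => ((hFsm.inv hFnz).mul (auxPd hU F hFsm lam)).add (hAsm lam)
  have hF0 : F x ≠ 0 := hFnz x hx
  have key : ∀ ν lam : Fin n,
      pd ν (fun y => ((Real.sqrt ((g y).det) * ((g y)⁻¹ ν lam) : ℝ) : ℂ)
          * (pd lam F y + A y lam * F y)) x
        = F x * pd ν (fun y => ((Real.sqrt ((g y).det) * ((g y)⁻¹ ν lam) : ℝ) : ℂ)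
              * ((F y)⁻¹ * pd lam F y + A y lam)) x
          + pd ν F x * (((Real.sqrt ((g x).det) * ((g x)⁻¹ ν lam) : ℝ) : ℂ)
              * ((F x)⁻¹ * pd lam F x + A x lam)) := by
    intro ν lam
    refine auxKey hU hx _ _ F ((hc ν lam).mul (hA' lam)) hFsm ?_ ν
    intro y hy
    have h0 : F y ≠ 0 := hFnz y hy
    field_simp
  have hSc : ((Real.sqrt ((g x).det) : ℝ) : ℂ) ≠ 0 := by
    exact_mod_cast (Real.sqrt_pos.mpr (hdet x hx)).ne'
  simp only [codiff, pairg, Complex.ofReal_inv]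
  rw [Finset.sum_congr rfl fun ν (_ : ν ∈ Finset.univ) =>
    Finset.sum_congr rfl fun lam _ => key ν lam]
  exact sumAlg _ (F x) hSc
    (fun ν lam => pd ν (fun y => ((Real.sqrt ((g y).det) * ((g y)⁻¹ ν lam) : ℝ) : ℂ)
        * ((F y)⁻¹ * pd lam F y + A y lam)) x)
    (fun ν lam => ((Real.sqrt ((g x).det) * ((g x)⁻¹ ν lam) : ℝ) : ℂ))
    (fun ν lam => (((g x)⁻¹ ν lam : ℝ) : ℂ))
    (fun ν => pd ν F x) (fun ν => A x ν)
    (fun ν => (F x)⁻¹ * pd ν F x + A x ν)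
    (fun ν lam => by push_cast; ring)
    (fun ν => by
      rw [mul_add, ← mul_assoc, mul_inv_cancel₀ hF0, one_mul, mul_comm (F x)])

/-- Lemma 4.1 in the scalar case: for a smooth nonvanishing `F : U → ℂ \ {0}` and the
gauge-transformed connection `A' = F⁻¹ dF + A`, the equation `d_A* d_A F = 0` holds on
`U` if and only if `d* A' = (A', A')_g` on `U`, where `d_A* α = d*α − (A, α)_g`. -/
theorem stmt19 {n : ℕ}
    (U : Set (EuclideanSpace ℝ (Fin n))) (hU : IsOpen U)
    (g : EuclideanSpace ℝ (Fin n) → Matrix (Fin n) (Fin n) ℝ)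
    (hgsm : ∀ i j, ContDiffOn ℝ (⊤ : ℕ∞) (fun x => g x i j) U)
    (hgsymm : ∀ x ∈ U, (g x)ᵀ = g x) (hgpos : ∀ x ∈ U, (g x).PosDef)
    (A : EuclideanSpace ℝ (Fin n) → Fin n → ℂ)
    (hAsm : ∀ ν, ContDiffOn ℝ (⊤ : ℕ∞) (fun x => A x ν) U)
    (F : EuclideanSpace ℝ (Fin n) → ℂ)
    (hFsm : ContDiffOn ℝ (⊤ : ℕ∞) F U) (hFnz : ∀ x ∈ U, F x ≠ 0) :
    (∀ x ∈ U,
        codiff g (fun y ν => pd ν F y + A y ν * F y) x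
          - pairg g A (fun y ν => pd ν F y + A y ν * F y) x = 0)
      ↔ (∀ x ∈ U,
        codiff g (fun y ν => (F y)⁻¹ * pd ν F y + A y ν) x
          = pairg g (fun y ν => (F y)⁻¹ * pd ν F y + A y ν)
              (fun y ν => (F y)⁻¹ * pd ν F y + A y ν) x) := by
  constructor
  · intro h x hx
    have hm := mainEq hU g hgsm hgpos A hAsm F hFsm hFnz hx
    rw [h x hx] at hm
    have := (mul_eq_zero.mp hm.symm).resolve_left (hFnz x hx)
    exact sub_eq_zero.mp this
  · intro h x hx
    have hm := mainEq hU g hgsm hgpos A hAsm F hFsm hFnz hx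
    rw [hm, h x hx, sub_self, mul_zero]
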